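/- arXiv:math/0607118 — 2 statements merged into one kernel-verified Lean document; each statement's English description precedes it below -/
import Mathlib

section
/- Let q be an odd prime power and let s, s' ∈ 𝔽_q be distinct. Then the affine points of the conic C_{s'} (its points other than Y_∞ = [0:1:0]) are all external to the conic C_s if χ(s'−s) = 1, and are all internal to C_s if χ(s'−s) = −1. -/
/-- The projective plane `PG(2,q)`: points are 1-dimensional subspaces of `F³`,
here modeled by `Projectivization`. -/
abbrev PGPoint (F : Type) [Field F] := Projectivization F (Fin 3 → F)

/-- Lines of `PG(2,q)` are the 2-dimensional subspaces of `F³`. -/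
def IsLine (F : Type) [Field F] (W : Submodule F (Fin 3 → F)) : Prop :=
  Module.finrank F W = 2

/-- A point lies on a line if its 1-dimensional subspace is contained in it. -/
def onLine {F : Type} [Field F] (P : PGPoint F) (W : Submodule F (Fin 3 → F)) : Prop :=
  P.submodule ≤ W

/-- The irreducible conic `C = {[x:y:z] : yz = x²}`. -/
def conicC (F : Type) [Field F] : Set (PGPoint F) :=
  {P | P.rep 1 * P.rep 2 = (P.rep 0) ^ 2}

/-- A line is tangent to a conic if it meets it in exactly one point. -/
def Tangent {F : Type} [Field F] (Con : Set (PGPoint F))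
    (W : Submodule F (Fin 3 → F)) : Prop :=
  IsLine F W ∧ Set.ncard {P | P ∈ Con ∧ onLine P W} = 1

/-- A line is a secant of a conic if it meets it in exactly two points. -/
def Secant {F : Type} [Field F] (Con : Set (PGPoint F))
    (W : Submodule F (Fin 3 → F)) : Prop :=
  IsLine F W ∧ Set.ncard {P | P ∈ Con ∧ onLine P W} = 2

/-- A line is external to a conic if it meets it in no point. -/
def ExternalLine {F : Type} [Field F] (Con : Set (PGPoint F))
    (W : Submodule F (Fin 3 → F)) : Prop :=
  IsLine F W ∧ Set.ncard {P | P ∈ Con ∧ onLine P W} = 0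

/-- A point not on the conic is external to it if it lies on some tangent line. -/
def ExternalPt {F : Type} [Field F] (Con : Set (PGPoint F)) (P : PGPoint F) : Prop :=
  P ∉ Con ∧ ∃ W, Tangent Con W ∧ onLine P W

/-- A point not on the conic is internal to it if it lies on no tangent line. -/
def InternalPt {F : Type} [Field F] (Con : Set (PGPoint F)) (P : PGPoint F) : Prop :=
  P ∉ Con ∧ ¬ ∃ W, Tangent Con W ∧ onLine P W

/-- A line partition of the set of internal points to a conic: a set of lines such
that every internal point lies on exactly one line of it, and every line of it
contains at least one internal point. -/
def LinePartition {F : Type} [Field F] (Con : Set (PGPoint F))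
    (L : Set (Submodule F (Fin 3 → F))) : Prop :=
  (∀ W ∈ L, IsLine F W) ∧
  (∀ P : PGPoint F, InternalPt Con P → ∃! W, W ∈ L ∧ onLine P W) ∧
  (∀ W ∈ L, ∃ P : PGPoint F, InternalPt Con P ∧ onLine P W)

/-- A Baer subplane of `PG(2,q)` (`q` a square): the points `[v]`, `v ≠ 0`, of a free
rank-3 module over a subfield of order `√q` whose `F`-span is everything. -/
def IsBaerSubplane {F : Type} [Field F] [Fintype F] (B : Set (PGPoint F)) : Prop :=
  ∃ (K : Subfield F) (M : Submodule K (Fin 3 → F)),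
    Nat.card K * Nat.card K = Fintype.card F ∧
    Module.finrank K M = 3 ∧
    Submodule.span F (M : Set (Fin 3 → F)) = ⊤ ∧
    B = {P : PGPoint F | ∃ v ∈ M, v ≠ 0 ∧ P.submodule = Submodule.span F {v}}

/-- The lines of a Baer subplane: the lines of `PG(2,q)` containing at least two of
its points. -/
def BaerLine {F : Type} [Field F] (B : Set (PGPoint F))
    (W : Submodule F (Fin 3 → F)) : Prop :=
  IsLine F W ∧ 2 ≤ Set.ncard {P | P ∈ B ∧ onLine P W}

/-- The conic `C_s = {[x:y:z] : yz = x² - s z²}` of the pencil `𝓕`. -/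
def conicCs (F : Type) [Field F] (s : F) : Set (PGPoint F) :=
  {P | P.rep 1 * P.rep 2 = (P.rep 0) ^ 2 - s * (P.rep 2) ^ 2}

/-- The infinite point `Y_∞ = [0:1:0]`. -/
def Yinf (F : Type) [Field F] : PGPoint F :=
  Projectivization.mk F ![0, 1, 0] (by
    intro h
    have := congrFun h 1
    simp at this)

/-- The line of `PG(2,q)` with affine equation `y = αx + β`, i.e. the 2-dimensional
subspace `{(x,y,z) : y = αx + βz}` of `F³`. -/
def affLine {F : Type} [Field F] (α β : F) : Submodule F (Fin 3 → F) where
  carrier := {v | v 1 = α * v 0 + β * v 2}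
  zero_mem' := by simp
  add_mem' := by
    intro a b ha hb
    simp only [Set.mem_setOf_eq, Pi.add_apply] at *
    rw [ha, hb]; ring
  smul_mem' := by
    intro c v hv
    simp only [Set.mem_setOf_eq, Pi.smul_apply, smul_eq_mul] at *
    rw [hv]; ring

/-!
An affine point of `C_{s'}` is `P = [t : t² - s' : 1]`. A line through `P` either passes
through `Y∞`, and then it also meets `C_s` in `[t : t² - s : 1]`, so it is not tangent; or it
is `y = αx + β`, whose points on `C_s` are the affine points with `x² = αx + (β + s)`. Such a
line is tangent exactly when this quadratic has a double root `x₀`, i.e. `α = 2x₀` and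
`β + s = -x₀²`, and then it passes through `P` iff `s' - s = (t - x₀)²`. Hence `P` lies on a
tangent of `C_s` iff `s' - s` is a square.
-/

open Projectivization

section Quadratic

variable {R : Type*} [CommRing R] [NoZeroDivisors R]

theorem ncard_setOf_sq_eq_eq_one_iff {a b : R} :
    {x | x ^ 2 = a * x + b}.ncard = 1 ↔ ∃ x₀, a = 2 * x₀ ∧ b = -x₀ ^ 2 := by
  constructor
  · intro h
    obtain ⟨x₀, hS⟩ := Set.ncard_eq_one.mp h
    have hx₀ : x₀ ^ 2 = a * x₀ + b := (hS.ge rfl :)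
    -- Vieta: the other root `a - x₀` must coincide with `x₀`.
    have hother : a - x₀ = x₀ := by
      have : a - x₀ ∈ {x | x ^ 2 = a * x + b} := by
        show _ = _
        linear_combination hx₀
      rwa [hS] at this
    exact ⟨x₀, by linear_combination hother, by linear_combination -hx₀ - x₀ * hother⟩
  · rintro ⟨x₀, rfl, rfl⟩
    convert Set.ncard_singleton x₀
    ext x
    refine ⟨fun (h : x ^ 2 = _) => ?_, fun (h : x = x₀) => by subst h; show x ^ 2 = _; ring⟩
    have hsq : (x - x₀) ^ 2 = 0 := by linear_combination h
    exact sub_eq_zero.mp (pow_eq_zero_iff two_ne_zero |>.mp hsq)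

end Quadratic

section Conic

variable {F : Type} [Field F]

def affPt (x y : F) : PGPoint F :=
  mk F ![x, y, 1] fun h => by simpa using congrFun h 2

lemma onLine_mk {v : Fin 3 → F} (hv : v ≠ 0) {W : Submodule F (Fin 3 → F)} :
    onLine (mk F v hv) W ↔ v ∈ W := by
  rw [onLine, submodule_mk, Submodule.span_singleton_le_iff_mem]

lemma mk_mem_conicCs_iff {s : F} {v : Fin 3 → F} (hv : v ≠ 0) :
    mk F v hv ∈ conicCs F s ↔ v 1 * v 2 = v 0 ^ 2 - s * v 2 ^ 2 := by
  obtain ⟨a, ha⟩ := exists_smul_eq_mk_rep F v hv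
  simp only [conicCs, Set.mem_ofPred_eq, ← ha, Pi.smul_apply, Units.smul_def, smul_eq_mul]
  constructor
  · intro h
    exact mul_left_cancel₀ (pow_ne_zero 2 a.ne_zero) (by linear_combination h)
  · intro h
    linear_combination (a : F) ^ 2 * h

lemma affPt_inj {x y x' y' : F} : affPt x y = affPt x' y' ↔ x = x' ∧ y = y' := by
  refine ⟨fun h => ?_, by rintro ⟨rfl, rfl⟩; rfl⟩
  obtain ⟨a, ha⟩ := (mk_eq_mk_iff' F _ _ _ _).mp h
  have h₀ := congrFun ha 0
  have h₁ := congrFun ha 1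
  have h₂ := congrFun ha 2
  simp only [Matrix.cons_val, Pi.smul_apply, smul_eq_mul, mul_one] at h₀ h₁ h₂
  subst h₂
  simp only [one_mul] at h₀ h₁
  exact ⟨h₀.symm, h₁.symm⟩

lemma Yinf_ne_affPt (x y : F) : Yinf F ≠ affPt x y := fun h => by
  obtain ⟨a, ha⟩ := (mk_eq_mk_iff' F _ _ _ _).mp h
  have h₁ := congrFun ha 1
  have h₂ := congrFun ha 2
  simp only [Matrix.cons_val, Pi.smul_apply, smul_eq_mul, mul_one] at h₁ h₂
  simp [h₂] at h₁

lemma affPt_mem_conicCs_iff {s x y : F} : affPt x y ∈ conicCs F s ↔ y = x ^ 2 - s := by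
  rw [affPt, mk_mem_conicCs_iff]
  simp

lemma Yinf_mem_conicCs (s : F) : Yinf F ∈ conicCs F s := by
  rw [Yinf, mk_mem_conicCs_iff]
  simp

lemma mem_conicCs_iff {s : F} {P : PGPoint F} :
    P ∈ conicCs F s ↔ P = Yinf F ∨ ∃ x, P = affPt x (x ^ 2 - s) := by
  refine ⟨fun hP => ?_, ?_⟩
  · induction P using Projectivization.ind with | h v hv => ?_
    rw [mk_mem_conicCs_iff] at hP
    by_cases hv₂ : v 2 = 0
    · left
      have hv₀ : v 0 = 0 := pow_eq_zero_iff two_ne_zero |>.mp (by simpa [hv₂] using hP.symm)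
      refine (mk_eq_mk_iff' F _ _ _ _).mpr ⟨v 1, ?_⟩
      ext i; fin_cases i <;> simp [hv₀, hv₂]
    · right
      refine ⟨v 0 / v 2, (mk_eq_mk_iff' F _ _ _ _).mpr ⟨v 2, ?_⟩⟩
      ext i
      fin_cases i <;> simp only [Fin.isValue, Fin.zero_eta, Fin.mk_one, Fin.reduceFinMk,
        Pi.smul_apply, Matrix.cons_val, smul_eq_mul, mul_one]
      · field_simp
      · field_simp
        linear_combination -hP
  · rintro (rfl | ⟨x, rfl⟩)
    · exact Yinf_mem_conicCs s
    · exact affPt_mem_conicCs_iff.mpr rfl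

lemma affPt_onLine_affLine_iff {x y α β : F} :
    onLine (affPt x y) (affLine α β) ↔ y = α * x + β := by
  rw [affPt, onLine_mk]
  simp [affLine]

lemma Yinf_not_onLine_affLine (α β : F) : ¬ onLine (Yinf F) (affLine α β) := by
  rw [Yinf, onLine_mk]
  simp [affLine]

lemma isLine_affLine (α β : F) : IsLine F (affLine α β) := by
  let φ : Module.Dual F (Fin 3 → F) :=
    LinearMap.proj 1 - α • LinearMap.proj 0 - β • LinearMap.proj 2
  have hker : affLine α β = LinearMap.ker φ := by
    ext v
    simp only [φ, affLine, LinearMap.mem_ker, Submodule.mem_mk, AddSubmonoid.mem_mk,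
      AddSubsemigroup.mem_mk, Set.mem_ofPred_eq, LinearMap.sub_apply, LinearMap.smul_apply,
      LinearMap.coe_proj, Function.eval, smul_eq_mul]
    constructor <;> intro h <;> linear_combination h
  have hφ : φ ≠ 0 := fun h => by simpa [φ] using LinearMap.congr_fun h ![0, 1, 0]
  have := Module.Dual.finrank_ker_add_one_of_ne_zero hφ
  rw [Module.finrank_fin_fun] at this
  rw [IsLine, hker]
  omega

lemma setOf_mem_conicCs_onLine_affLine (s α β : F) :
    {P | P ∈ conicCs F s ∧ onLine P (affLine α β)} =
      (fun x => affPt x (x ^ 2 - s)) '' {x | x ^ 2 = α * x + (β + s)} := by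
  ext P
  simp only [Set.mem_ofPred_eq, Set.mem_image, mem_conicCs_iff]
  constructor
  · rintro ⟨rfl | ⟨x, rfl⟩, hP⟩
    · exact absurd hP (Yinf_not_onLine_affLine α β)
    · exact ⟨x, by linear_combination affPt_onLine_affLine_iff.mp hP, rfl⟩
  · rintro ⟨x, hx, rfl⟩
    exact ⟨Or.inr ⟨x, rfl⟩, affPt_onLine_affLine_iff.mpr (by linear_combination hx)⟩

lemma tangent_affLine_iff {s α β : F} :
    Tangent (conicCs F s) (affLine α β) ↔ ∃ x₀, α = 2 * x₀ ∧ β + s = -x₀ ^ 2 := by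
  have hinj : Function.Injective fun x : F => affPt x (x ^ 2 - s) :=
    fun x x' h => (affPt_inj.mp h).1
  rw [Tangent, setOf_mem_conicCs_onLine_affLine, Set.ncard_image_of_injective _ hinj,
    ncard_setOf_sq_eq_eq_one_iff]
  exact and_iff_right (isLine_affLine α β)

lemma exists_eq_affLine_of_not_onLine_Yinf {W : Submodule F (Fin 3 → F)} (hW : IsLine F W)
    (hY : ¬ onLine (Yinf F) W) : ∃ α β, W = affLine α β := by
  rw [Yinf, onLine_mk] at hY
  have htop : W ⊔ F ∙ ![0, 1, 0] = ⊤ := by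
    have hlt : W < W ⊔ F ∙ ![0, 1, 0] :=
      SetLike.lt_iff_le_and_exists.mpr ⟨le_sup_left, _,
        Submodule.mem_sup_right (Submodule.mem_span_singleton_self _), hY⟩
    have h₁ := Submodule.finrank_lt_finrank_of_lt hlt
    have h₂ := Submodule.finrank_le (W ⊔ F ∙ ![0, 1, 0])
    rw [Module.finrank_fin_fun] at h₂
    rw [IsLine] at hW
    exact Submodule.eq_top_of_finrank_eq (by rw [Module.finrank_fin_fun]; omega)
  -- `W` is a complement of the direction of `Y∞`, so it is a graph over the `(x, z)`-plane.
  have hgraph : ∀ v : Fin 3 → F, ∃ c : F, v + c • ![0, 1, 0] ∈ W := by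
    intro v
    have hv : v ∈ W ⊔ F ∙ ![0, 1, 0] := by rw [htop]; exact Submodule.mem_top
    obtain ⟨w, hw, z, hz, hwz⟩ := Submodule.mem_sup.mp hv
    obtain ⟨c, rfl⟩ := Submodule.mem_span_singleton.mp hz
    exact ⟨-c, by rwa [← hwz, neg_smul, add_neg_cancel_right]⟩
  obtain ⟨a, ha⟩ := hgraph ![1, 0, 0]
  obtain ⟨b, hb⟩ := hgraph ![0, 0, 1]
  have hrank : Module.finrank F (affLine a b) = Module.finrank F W :=
    (isLine_affLine a b).trans hW.symm
  refine ⟨a, b, (Submodule.eq_of_le_of_finrank_eq ?_ hrank).symm⟩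
  intro v (hv : v 1 = a * v 0 + b * v 2)
  convert W.add_mem (W.smul_mem (v 0) ha) (W.smul_mem (v 2) hb) using 1
  ext i; fin_cases i <;> simp [hv, mul_comm]

lemma not_tangent_of_onLine_Yinf {s x y : F} {W : Submodule F (Fin 3 → F)}
    (hY : onLine (Yinf F) W) (hP : onLine (affPt x y) W) : ¬ Tangent (conicCs F s) W := by
  rintro ⟨-, hW⟩
  have hQ : onLine (affPt x (x ^ 2 - s)) W := by
    rw [Yinf, onLine_mk] at hY
    rw [affPt, onLine_mk] at hP ⊢
    convert W.add_mem hP (W.smul_mem (x ^ 2 - s - y) hY) using 1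
    ext i; fin_cases i <;> simp
  obtain ⟨R, hR⟩ := Set.ncard_eq_one.mp hW
  have hYR : Yinf F ∈ ({R} : Set _) := hR ▸ ⟨Yinf_mem_conicCs s, hY⟩
  have hQR : affPt x (x ^ 2 - s) ∈ ({R} : Set _) := hR ▸ ⟨affPt_mem_conicCs_iff.mpr rfl, hQ⟩
  exact Yinf_ne_affPt _ _ (hYR.trans hQR.symm)

lemma externalPt_affPt_of_isSquare {s s' : F} (hne : s ≠ s') (hsq : IsSquare (s' - s)) (t : F) :
    ExternalPt (conicCs F s) (affPt t (t ^ 2 - s')) := by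
  obtain ⟨r, hr⟩ := hsq
  -- the tangent at the point of `C_s` with abscissa `t + r`
  refine ⟨fun h => hne ?_, affLine (2 * (t + r)) (-(t + r) ^ 2 - s),
    tangent_affLine_iff.mpr ⟨t + r, rfl, by ring⟩, affPt_onLine_affLine_iff.mpr ?_⟩
  · linear_combination affPt_mem_conicCs_iff.mp h
  · linear_combination -hr

lemma internalPt_affPt_of_not_isSquare {s s' : F} (hsq : ¬ IsSquare (s' - s)) (t : F) :
    InternalPt (conicCs F s) (affPt t (t ^ 2 - s')) := by
  refine ⟨fun h => hsq ⟨0, by linear_combination -affPt_mem_conicCs_iff.mp h⟩, ?_⟩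
  rintro ⟨W, hW, hPW⟩
  by_cases hY : onLine (Yinf F) W
  · exact not_tangent_of_onLine_Yinf hY hPW hW
  obtain ⟨α, β, rfl⟩ := exists_eq_affLine_of_not_onLine_Yinf hW.1 hY
  obtain ⟨x₀, rfl, hβ⟩ := tangent_affLine_iff.mp hW
  exact hsq ⟨t - x₀, by linear_combination -affPt_onLine_affLine_iff.mp hPW - hβ⟩

end Conic

theorem affine_points_external_or_internal_general (F : Type) [Field F] [Fintype F]
    [DecidableEq F] (s s' : F) :
    (quadraticChar F (s' - s) = 1 →
      ∀ P ∈ conicCs F s', P ≠ Yinf F → ExternalPt (conicCs F s) P) ∧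
    (quadraticChar F (s' - s) = -1 →
      ∀ P ∈ conicCs F s', P ≠ Yinf F → InternalPt (conicCs F s) P) := by
  have affine : ∀ P ∈ conicCs F s', P ≠ Yinf F → ∃ t, P = affPt t (t ^ 2 - s') :=
    fun P hP hPY => (mem_conicCs_iff.mp hP).resolve_left hPY
  refine ⟨fun hχ P hP hPY => ?_, fun hχ P hP hPY => ?_⟩
  · have hne : s' - s ≠ 0 := fun h => by simp [h] at hχ
    obtain ⟨t, rfl⟩ := affine P hP hPY
    exact externalPt_affPt_of_isSquare (sub_ne_zero.mp hne).symm
      ((quadraticChar_one_iff_isSquare hne).mp hχ) t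
  · obtain ⟨t, rfl⟩ := affine P hP hPY
    exact internalPt_affPt_of_not_isSquare (quadraticChar_neg_one_iff_not_isSquare.mp hχ) t

/-- For distinct `s, s' ∈ 𝔽_q`, `q` odd, the affine points of `C_{s'}` are all
external to `C_s` if `χ(s'-s) = 1`, and all internal to `C_s` if `χ(s'-s) = -1`. -/
theorem affine_points_external_or_internal (F : Type) [Field F] [Fintype F]
    [DecidableEq F] (q : ℕ) (hq : Odd q) (hcard : Fintype.card F = q)
    (s s' : F) (hss' : s ≠ s') :
    (quadraticChar F (s' - s) = 1 →
      ∀ P ∈ conicCs F s', P ≠ Yinf F → ExternalPt (conicCs F s) P) ∧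
    (quadraticChar F (s' - s) = -1 →
      ∀ P ∈ conicCs F s', P ≠ Yinf F → InternalPt (conicCs F s) P) :=
  affine_points_external_or_internal_general F s s'
end

section
/- Let q be a prime power with q ≡ 3 (mod 4), and let N ⊆ 𝔽_q be the set of nonsquares of 𝔽_q. Suppose φ : N → ℤ satisfies, for every s ∈ N, Σ_{s' ∈ N, χ(s'−s) = −1} φ(s') = Σ_{s' ∈ N, s' ≠ s, χ(s'−s) = 1} φ(s'). Then φ is constant. -/
open Finset

namespace ConstantFunctionAux

variable {F : Type} [Field F] [Fintype F] [DecidableEq F]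

lemma char_ne_two (hq : Fintype.card F % 4 = 3) : ringChar F ≠ 2 := by
  intro h
  have h2 := FiniteField.even_card_of_char_two (F := F) h
  omega

lemma chi_neg_one (hq : Fintype.card F % 4 = 3) : quadraticChar F (-1) = -1 := by
  rw [quadraticChar_neg_one_iff_not_isSquare, FiniteField.isSquare_neg_one_iff]
  exact not_not_intro hq

lemma chi_ne_zero {s : F} (hs : quadraticChar F s = -1) : s ≠ 0 := by
  intro h
  rw [h, quadraticChar_zero] at hs
  exact absurd hs (by norm_num)

lemma sum_chi_sub (hq : Fintype.card F % 4 = 3) (s : F) :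
    ∑ x : F, quadraticChar F (x - s) = 0 := by
  have e : ∑ x : F, quadraticChar F (x - s) = ∑ a : F, quadraticChar F a :=
    Fintype.sum_equiv (Equiv.subRight s) _ _ fun x => by simp
  rw [e, quadraticChar_sum_zero (char_ne_two hq)]

lemma sum_chi_sub_ne (hq : Fintype.card F % 4 = 3) (s : F) :
    ∑ x ∈ univ.filter (fun x : F => x ≠ 0), quadraticChar F (x - s)
      = - quadraticChar F (-s) := by
  have h0 := sum_chi_sub hq s
  rw [← Finset.sum_filter_add_sum_filter_not univ (fun x : F => x ≠ 0)
      (fun x => quadraticChar F (x - s))] at h0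
  have hfe : univ.filter (fun x : F => ¬ x ≠ 0) = {0} := by
    ext x; simp
  rw [hfe, Finset.sum_singleton, zero_sub] at h0
  linarith

lemma sum_chi_mul (hq : Fintype.card F % 4 = 3) {s : F} (hs : quadraticChar F s = -1) :
    ∑ x ∈ univ.filter (fun x : F => x ≠ 0),
      quadraticChar F x * quadraticChar F (x - s) = -1 := by
  have hs0 : s ≠ 0 := chi_ne_zero hs
  have step : ∑ x ∈ univ.filter (fun x : F => x ≠ 0),
        quadraticChar F x * quadraticChar F (x - s)
      = ∑ v ∈ univ.filter (fun v : F => v ≠ 0), quadraticChar F (1 - v) := by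
    refine Finset.sum_nbij' (fun x => s * x⁻¹) (fun v => s * v⁻¹) ?_ ?_ ?_ ?_ ?_
    · intro a ha
      simp only [mem_filter, mem_univ, true_and] at ha ⊢
      exact mul_ne_zero hs0 (inv_ne_zero ha)
    · intro a ha
      simp only [mem_filter, mem_univ, true_and] at ha ⊢
      exact mul_ne_zero hs0 (inv_ne_zero ha)
    · intro a ha
      simp only [mem_filter, mem_univ, true_and] at ha
      field_simp
    · intro a ha
      simp only [mem_filter, mem_univ, true_and] at ha
      field_simp
    · intro a ha
      simp only [mem_filter, mem_univ, true_and] at ha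
      have key : a * (a - s) = a ^ 2 * (1 - s * a⁻¹) := by
        field_simp
      rw [← map_mul, key, map_mul, quadraticChar_sq_one' ha, one_mul]
  rw [step]
  have e2 : ∑ v ∈ univ.filter (fun v : F => v ≠ 0), quadraticChar F (1 - v)
      = - ∑ v ∈ univ.filter (fun v : F => v ≠ 0), quadraticChar F (v - 1) := by
    rw [← Finset.sum_neg_distrib]
    apply Finset.sum_congr rfl
    intro v _
    have hv : (1 : F) - v = (-1) * (v - 1) := by ring
    rw [hv, map_mul, chi_neg_one hq, neg_one_mul]
  rw [e2, sum_chi_sub_ne hq 1]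
  have : (-(1:F)) = -1 := rfl
  rw [this, chi_neg_one hq]
  norm_num

lemma key_sum (hq : Fintype.card F % 4 = 3) {s : F} (hs : quadraticChar F s = -1) :
    ∑ x ∈ univ.filter (fun x : F => quadraticChar F x = -1), quadraticChar F (x - s) = 0 := by
  have hT1 : ∑ x ∈ univ.filter (fun x : F => x ≠ 0), quadraticChar F (x - s) = -1 := by
    rw [sum_chi_sub_ne hq s]
    have hns : (-s : F) = (-1) * s := by ring
    rw [hns, map_mul, chi_neg_one hq, hs]
    norm_num
  have hT2 := sum_chi_mul hq hs
  have hsplit := Finset.sum_filter_add_sum_filter_not (univ.filter (fun x : F => x ≠ 0))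
      (fun x : F => quadraticChar F x = -1)
      (fun x : F => (1 - quadraticChar F x) * quadraticChar F (x - s))
  have hA : (univ.filter (fun x : F => x ≠ 0)).filter (fun x => quadraticChar F x = -1)
      = univ.filter (fun x : F => quadraticChar F x = -1) := by
    rw [Finset.filter_filter]
    apply Finset.filter_congr
    intro x _
    constructor
    · exact fun hx => hx.2
    · exact fun hx => ⟨chi_ne_zero hx, hx⟩
  have hfirst : ∑ x ∈ (univ.filter (fun x : F => x ≠ 0)).filter
        (fun x => quadraticChar F x = -1),
        (1 - quadraticChar F x) * quadraticChar F (x - s)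
      = 2 * ∑ x ∈ univ.filter (fun x : F => quadraticChar F x = -1),
          quadraticChar F (x - s) := by
    rw [hA, Finset.mul_sum]
    apply Finset.sum_congr rfl
    intro x hx
    simp only [mem_filter, mem_univ, true_and] at hx
    rw [hx]
    ring
  have hsecond : ∑ x ∈ (univ.filter (fun x : F => x ≠ 0)).filter
        (fun x => ¬ quadraticChar F x = -1),
        (1 - quadraticChar F x) * quadraticChar F (x - s) = 0 := by
    apply Finset.sum_eq_zero
    intro x hx
    simp only [mem_filter, mem_univ, true_and] at hx
    rcases quadraticChar_dichotomy hx.1 with h1 | h1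
    · rw [h1]; ring
    · exact absurd h1 hx.2
  have htotal : ∑ x ∈ univ.filter (fun x : F => x ≠ 0),
        (1 - quadraticChar F x) * quadraticChar F (x - s) = 0 := by
    have hexp : ∀ x : F, (1 - quadraticChar F x) * quadraticChar F (x - s)
        = quadraticChar F (x - s) - quadraticChar F x * quadraticChar F (x - s) := by
      intro x; ring
    rw [Finset.sum_congr rfl (fun x _ => hexp x), Finset.sum_sub_distrib, hT1, hT2]
    ring
  rw [hfirst, hsecond, htotal] at hsplit
  linarith

lemma card_eq (hq : Fintype.card F % 4 = 3) {s : F} (hs : quadraticChar F s = -1) :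
    ((univ.filter (fun x : F => quadraticChar F x = -1 ∧ x ≠ s ∧
        quadraticChar F (x - s) = 1)).card : ℤ)
  = ((univ.filter (fun x : F => quadraticChar F x = -1 ∧
        quadraticChar F (x - s) = -1)).card : ℤ) := by
  have hkey := key_sum hq hs
  have hrw : ((univ.filter (fun x : F => quadraticChar F x = -1 ∧ x ≠ s ∧
        quadraticChar F (x - s) = 1)).card : ℤ)
      - ((univ.filter (fun x : F => quadraticChar F x = -1 ∧
        quadraticChar F (x - s) = -1)).card : ℤ)
      = ∑ x ∈ univ.filter (fun x : F => quadraticChar F x = -1),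
          quadraticChar F (x - s) := by
    have c1 : ((univ.filter (fun x : F => quadraticChar F x = -1 ∧ x ≠ s ∧
          quadraticChar F (x - s) = 1)).card : ℤ)
        = ∑ x ∈ univ.filter (fun x : F => quadraticChar F x = -1),
            (if x ≠ s ∧ quadraticChar F (x - s) = 1 then (1:ℤ) else 0) := by
      rw [Finset.sum_boole, Finset.filter_filter]
    have c2 : ((univ.filter (fun x : F => quadraticChar F x = -1 ∧
          quadraticChar F (x - s) = -1)).card : ℤ)
        = ∑ x ∈ univ.filter (fun x : F => quadraticChar F x = -1),
            (if quadraticChar F (x - s) = -1 then (1:ℤ) else 0) := by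
      rw [Finset.sum_boole, Finset.filter_filter]
    rw [c1, c2, ← Finset.sum_sub_distrib]
    apply Finset.sum_congr rfl
    intro x _
    by_cases hxs : x = s
    · subst hxs
      simp only [sub_self, quadraticChar_zero]
      norm_num
    · rcases quadraticChar_dichotomy (sub_ne_zero.mpr hxs) with h1 | h1 <;>
        norm_num [h1, hxs]
  rw [hkey] at hrw
  linarith

def Hyp (φ : F → ℤ) : Prop :=
  ∀ s : F, quadraticChar F s = -1 →
    ∑ x ∈ univ.filter (fun x : F => quadraticChar F x = -1 ∧
        quadraticChar F (x - s) = -1), φ x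
  = ∑ x ∈ univ.filter (fun x : F => quadraticChar F x = -1 ∧ x ≠ s ∧
        quadraticChar F (x - s) = 1), φ x

lemma split_sum (φ : F → ℤ) {s : F} (hs : quadraticChar F s = -1) :
    ∑ x ∈ univ.filter (fun x : F => quadraticChar F x = -1), φ x
      = φ s
        + ∑ x ∈ univ.filter (fun x : F => quadraticChar F x = -1 ∧
            quadraticChar F (x - s) = -1), φ x
        + ∑ x ∈ univ.filter (fun x : F => quadraticChar F x = -1 ∧ x ≠ s ∧
            quadraticChar F (x - s) = 1), φ x := by
  have h1 := Finset.sum_filter_add_sum_filter_not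
      (univ.filter (fun x : F => quadraticChar F x = -1)) (fun x : F => x = s) φ
  have hNs : (univ.filter (fun x : F => quadraticChar F x = -1)).filter
      (fun x => x = s) = {s} := by
    ext x
    simp only [mem_filter, mem_univ, true_and, mem_singleton]
    constructor
    · exact fun h => h.2
    · rintro rfl; exact ⟨hs, rfl⟩
  have h2 := Finset.sum_filter_add_sum_filter_not
      ((univ.filter (fun x : F => quadraticChar F x = -1)).filter (fun x : F => ¬ x = s))
      (fun x : F => quadraticChar F (x - s) = -1) φ
  have hAeq : (((univ.filter (fun x : F => quadraticChar F x = -1)).filter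
        (fun x : F => ¬ x = s)).filter (fun x : F => quadraticChar F (x - s) = -1))
      = univ.filter (fun x : F => quadraticChar F x = -1 ∧
          quadraticChar F (x - s) = -1) := by
    rw [Finset.filter_filter, Finset.filter_filter]
    apply Finset.filter_congr
    intro x _
    constructor
    · rintro ⟨hx, _, hx2⟩; exact ⟨hx, hx2⟩
    · rintro ⟨hx, hx2⟩
      refine ⟨hx, fun he => ?_, hx2⟩
      rw [he, sub_self, quadraticChar_zero] at hx2
      norm_num at hx2
  have hBeq : (((univ.filter (fun x : F => quadraticChar F x = -1)).filter
        (fun x : F => ¬ x = s)).filter (fun x : F => ¬ quadraticChar F (x - s) = -1))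
      = univ.filter (fun x : F => quadraticChar F x = -1 ∧ x ≠ s ∧
          quadraticChar F (x - s) = 1) := by
    rw [Finset.filter_filter, Finset.filter_filter]
    apply Finset.filter_congr
    intro x _
    constructor
    · rintro ⟨hx, hxs, hx2⟩
      rcases quadraticChar_dichotomy (sub_ne_zero.mpr hxs) with h' | h'
      · exact ⟨hx, hxs, h'⟩
      · exact absurd h' hx2
    · rintro ⟨hx, hxs, hx2⟩
      refine ⟨hx, hxs, fun h' => ?_⟩
      rw [h'] at hx2
      norm_num at hx2
  rw [hNs, Finset.sum_singleton] at h1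
  rw [hAeq, hBeq] at h2
  linarith

lemma hyp_shift (hq : Fintype.card F % 4 = 3) (φ : F → ℤ) (hφ : Hyp φ) (c : ℤ) :
    Hyp (fun x => φ x - c) := by
  intro s hs
  rw [Finset.sum_sub_distrib, Finset.sum_sub_distrib, Finset.sum_const, Finset.sum_const,
    hφ s hs]
  simp only [nsmul_eq_mul]
  rw [← card_eq hq hs]

lemma hyp_half (φ : F → ℤ) (hφ : Hyp φ)
    (heven : ∀ x : F, quadraticChar F x = -1 → 2 ∣ φ x) :
    Hyp (fun x => φ x / 2) := by
  intro s hs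
  have hA : (2:ℤ) * ∑ x ∈ univ.filter (fun x : F => quadraticChar F x = -1 ∧
        quadraticChar F (x - s) = -1), φ x / 2
      = ∑ x ∈ univ.filter (fun x : F => quadraticChar F x = -1 ∧
        quadraticChar F (x - s) = -1), φ x := by
    rw [Finset.mul_sum]
    apply Finset.sum_congr rfl
    intro x hx
    simp only [mem_filter, mem_univ, true_and] at hx
    exact Int.mul_ediv_cancel' (heven x hx.1)
  have hB : (2:ℤ) * ∑ x ∈ univ.filter (fun x : F => quadraticChar F x = -1 ∧ x ≠ s ∧
        quadraticChar F (x - s) = 1), φ x / 2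
      = ∑ x ∈ univ.filter (fun x : F => quadraticChar F x = -1 ∧ x ≠ s ∧
        quadraticChar F (x - s) = 1), φ x := by
    rw [Finset.mul_sum]
    apply Finset.sum_congr rfl
    intro x hx
    simp only [mem_filter, mem_univ, true_and] at hx
    exact Int.mul_ediv_cancel' (heven x hx.1)
  have hh := hφ s hs
  linarith

lemma descent (hq : Fintype.card F % 4 = 3) :
    ∀ n : ℕ, ∀ φ : F → ℤ, Hyp φ →
    (∑ x ∈ univ.filter (fun x : F => quadraticChar F x = -1), (φ x).natAbs) = n →
    ∀ t : F, quadraticChar F t = -1 → φ t = 0 →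
    ∀ s : F, quadraticChar F s = -1 → φ s = 0 := by
  intro n
  induction n using Nat.strong_induction_on with
  | _ n ih =>
    intro φ hφ hn t ht ht0 s hs
    have hparity : ∀ x : F, quadraticChar F x = -1 →
        2 ∣ (∑ y ∈ univ.filter (fun y : F => quadraticChar F y = -1), φ y) - φ x := by
      intro x hx
      have hsp := split_sum φ hx
      have hh := hφ x hx
      exact ⟨∑ y ∈ univ.filter (fun y : F => quadraticChar F y = -1 ∧ y ≠ x ∧
          quadraticChar F (y - x) = 1), φ y, by linarith⟩
    have heven : ∀ x : F, quadraticChar F x = -1 → 2 ∣ φ x := by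
      intro x hx
      have h1 := hparity x hx
      have h2 := hparity t ht
      rw [ht0, sub_zero] at h2
      omega
    by_cases hn0 : n = 0
    · subst hn0
      have hz := Finset.sum_eq_zero_iff.mp hn
      have hmem : s ∈ univ.filter (fun x : F => quadraticChar F x = -1) :=
        mem_filter.mpr ⟨mem_univ s, hs⟩
      have := hz s hmem
      omega
    · have hψhyp : Hyp (fun x => φ x / 2) := hyp_half φ hφ heven
      have hval : ∀ x : F, quadraticChar F x = -1 → φ x = 2 * (φ x / 2) := fun x hx =>
        (Int.mul_ediv_cancel' (heven x hx)).symm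
      have hm : 2 * (∑ x ∈ univ.filter (fun x : F => quadraticChar F x = -1),
          (φ x / 2).natAbs) = n := by
        rw [← hn, Finset.mul_sum]
        apply Finset.sum_congr rfl
        intro x hx
        simp only [mem_filter, mem_univ, true_and] at hx
        rw [hval x hx, Int.natAbs_mul]
        norm_num
      have hlt : (∑ x ∈ univ.filter (fun x : F => quadraticChar F x = -1),
          (φ x / 2).natAbs) < n := by omega
      have hψt : (fun x => φ x / 2) t = 0 := by
        show φ t / 2 = 0
        rw [ht0]
        rfl
      have hzero := ih _ hlt (fun x => φ x / 2) hψhyp rfl t ht hψt s hs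
      rw [hval s hs, hzero, mul_zero]

end ConstantFunctionAux

open Finset in
/-- For `q ≡ 3 (mod 4)`, any integer function `φ` on the set of nonsquares of `𝔽_q`
such that, for every nonsquare `s`, the sum of `φ` over the nonsquares `s'` with
`χ(s'-s) = -1` equals the sum of `φ` over the nonsquares `s' ≠ s` with
`χ(s'-s) = 1`, is constant. -/
theorem constant_function (F : Type) [Field F] [Fintype F] [DecidableEq F]
    (q : ℕ) (hcard : Fintype.card F = q) (hmod : q % 4 = 3) (φ : F → ℤ)
    (h : ∀ s : F, quadraticChar F s = -1 →
      ∑ s' ∈ univ.filter (fun s' : F =>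
          quadraticChar F s' = -1 ∧ quadraticChar F (s' - s) = -1), φ s' =
      ∑ s' ∈ univ.filter (fun s' : F =>
          quadraticChar F s' = -1 ∧ s' ≠ s ∧ quadraticChar F (s' - s) = 1), φ s') :
    ∀ s t : F, quadraticChar F s = -1 → quadraticChar F t = -1 → φ s = φ t := by
  intro s t hs ht
  have hq : Fintype.card F % 4 = 3 := by rw [hcard]; exact hmod
  have hφ : ConstantFunctionAux.Hyp φ := h
  have h' : ConstantFunctionAux.Hyp (fun x => φ x - φ t) :=
    ConstantFunctionAux.hyp_shift hq φ hφ (φ t)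
  have hz := ConstantFunctionAux.descent hq _ (fun x => φ x - φ t) h' rfl t ht
    (by simp) s hs
  linarith
end
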